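/- Let m ≥ 1, r, s ≥ 1 and p_k, q_k ∈ [1,∞) with q_k ≥ p_k for all k and 1/r − ∑_k 1/p_k + ∑_k 1/q_k > 0, and define s by 1/s = 1/r − ∑_k 1/p_k + ∑_k 1/q_k. Then every multiple (r; p₁,…,p_m)-summing m-linear operator T : X₁ × ⋯ × X_m → Y is multiple (s; q₁,…,q_m)-summing. -/

import Mathlib

/-!
Raise the exponents one coordinate at a time. If `T` is `(t; P)`-summing, `P i < q'` and
`1/u = 1/P i - 1/q'`, `1/t' = 1/t - 1/u`, then the `ℓ^{t'}` norm of `(‖T(x_j)‖)_j` is at most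
the `ℓ^{t'}` norm of its `ℓ^t` norms along the fibres of `j ↦ j i` (as `t ≤ t'`), and by the
equality case of Hölder's inequality that equals `(∑_j (λ_{j_i} ‖T(x_j)‖)^t)^{1/t}` for some
weight `λ` of `ℓ^u` norm `≤ 1`. Scaling the `i`-th family by `λ` therefore turns the hypothesis
into the desired bound, since by Hölder again the weak `ℓ^{P i}` norm of `(λ_l x_l)` is at most
the weak `ℓ^{q'}` norm of `(x_l)`. After all coordinates, `1/t' = 1/r - ∑ (1/p_k - 1/q_k) = 1/s`.
-/

open scoped BigOperators

/-- The weak ℓ^p norm of a finite family in a normed space: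
`sup_{φ ∈ B_{X'}} (∑ j |φ(x_j)|^p)^(1/p)`. -/
noncomputable def weakNorm {X : Type*} [NormedAddCommGroup X] [NormedSpace ℝ X]
    {n : ℕ} (x : Fin n → X) (p : ℝ) : ℝ :=
  ⨆ φ : {φ : X →L[ℝ] ℝ // ‖φ‖ ≤ 1}, (∑ j, |φ.1 (x j)| ^ p) ^ (1 / p)

open Finset

namespace Real

theorem sum_rpow_le_rpow_sum {ι : Type*} (s : Finset ι) {f : ι → ℝ} (hf : ∀ i ∈ s, 0 ≤ f i)
    {θ : ℝ} (hθ : 1 ≤ θ) : ∑ i ∈ s, f i ^ θ ≤ (∑ i ∈ s, f i) ^ θ := by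
  classical
  induction s using Finset.induction_on with
  | empty => simp [zero_rpow (by positivity : θ ≠ 0)]
  | insert a s ha ih =>
    rw [sum_insert ha, sum_insert ha]
    have hs := fun i hi => hf i (mem_insert_of_mem hi)
    calc f a ^ θ + ∑ i ∈ s, f i ^ θ ≤ f a ^ θ + (∑ i ∈ s, f i) ^ θ := by gcongr; exact ih hs
      _ ≤ (f a + ∑ i ∈ s, f i) ^ θ :=
        add_rpow_le_rpow_add (hf a (mem_insert_self a s)) (sum_nonneg hs) hθ

theorem sum_rpow_le_sum_fiberwise_rpow {ι κ : Type*} [Fintype ι] [Fintype κ] [DecidableEq κ]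
    (g : ι → κ) {b : ι → ℝ} (hb : ∀ i, 0 ≤ b i) {t t' : ℝ} (ht : 0 < t) (htt' : t ≤ t') :
    ∑ i, b i ^ t' ≤ ∑ k, ((∑ i with g i = k, b i ^ t) ^ (1 / t)) ^ t' := by
  rw [← sum_fiberwise univ g]
  refine sum_le_sum fun k _ => ?_
  have hfib : 0 ≤ ∑ i with g i = k, b i ^ t := sum_nonneg fun i _ => rpow_nonneg (hb i) t
  calc ∑ i with g i = k, b i ^ t' = ∑ i with g i = k, (b i ^ t) ^ (t' / t) := by
        refine sum_congr rfl fun i _ => ?_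
        rw [← rpow_mul (hb i), mul_div_cancel₀ _ ht.ne']
    _ ≤ (∑ i with g i = k, b i ^ t) ^ (t' / t) :=
        sum_rpow_le_rpow_sum _ (fun i _ => rpow_nonneg (hb i) t) ((one_le_div ht).2 htt')
    _ = ((∑ i with g i = k, b i ^ t) ^ (1 / t)) ^ t' := by
        rw [← rpow_mul hfib, one_div_mul_eq_div]

theorem sum_mul_fiberwise_rpow {ι κ : Type*} [Fintype ι] [Fintype κ] [DecidableEq κ]
    (g : ι → κ) {b : ι → ℝ} (hb : ∀ i, 0 ≤ b i) {w : κ → ℝ} (hw : ∀ k, 0 ≤ w k) {t : ℝ}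
    (ht : 0 < t) :
    ∑ k, (w k * (∑ i with g i = k, b i ^ t) ^ (1 / t)) ^ t = ∑ i, (w (g i) * b i) ^ t := by
  rw [← sum_fiberwise univ g]
  refine sum_congr rfl fun k _ => ?_
  have hfib : 0 ≤ ∑ i with g i = k, b i ^ t := sum_nonneg fun i _ => rpow_nonneg (hb i) t
  rw [mul_rpow (hw k) (rpow_nonneg hfib _), ← rpow_mul hfib, one_div_mul_cancel ht.ne', rpow_one,
    mul_sum]
  refine sum_congr rfl fun i hi => ?_
  rw [(mem_filter.1 hi).2, mul_rpow (hw k) (hb i)]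

theorem Lr_le_Lp_mul_Lq_of_nonneg {ι : Type*} (s : Finset ι) {f g : ι → ℝ} {p q r : ℝ}
    (hpqr : p.HolderTriple q r) (hf : ∀ i ∈ s, 0 ≤ f i) (hg : ∀ i ∈ s, 0 ≤ g i) :
    (∑ i ∈ s, (f i * g i) ^ r) ^ (1 / r) ≤
      (∑ i ∈ s, f i ^ p) ^ (1 / p) * (∑ i ∈ s, g i ^ q) ^ (1 / q) := by
  have hsum : ∀ {e : ℝ} {h : ι → ℝ}, (∀ i ∈ s, 0 ≤ h i) → 0 ≤ ∑ i ∈ s, h i ^ e :=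
    fun hh => sum_nonneg fun i hi => rpow_nonneg (hh i hi) _
  calc (∑ i ∈ s, (f i * g i) ^ r) ^ (1 / r)
      ≤ ((∑ i ∈ s, f i ^ p) ^ (r / p) * (∑ i ∈ s, g i ^ q) ^ (r / q)) ^ (1 / r) :=
        rpow_le_rpow (hsum fun i hi => mul_nonneg (hf i hi) (hg i hi))
          (Lr_rpow_le_Lp_mul_Lq_of_nonneg s hpqr hf hg) hpqr.one_div_nonneg'
    _ = (∑ i ∈ s, f i ^ p) ^ (1 / p) * (∑ i ∈ s, g i ^ q) ^ (1 / q) := by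
        rw [mul_rpow (rpow_nonneg (hsum hf) _) (rpow_nonneg (hsum hg) _), ← rpow_mul (hsum hf),
          ← rpow_mul (hsum hg)]
        field_simp [hpqr.ne_zero']

namespace HolderTriple

theorem exists_norming_weight {κ : Type*} [Fintype κ] {a : κ → ℝ} (ha : ∀ k, 0 ≤ a k)
    {t' u t : ℝ} (h : t'.HolderTriple u t) :
    ∃ w : κ → ℝ, (∀ k, 0 ≤ w k) ∧ ∑ k, w k ^ u ≤ 1 ∧
      (∑ k, a k ^ t') ^ (1 / t') ≤ (∑ k, (w k * a k) ^ t) ^ (1 / t) := by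
  obtain ⟨ht', hu, ht⟩ := h.all_pos
  set S := ∑ k, a k ^ t'
  have hS : 0 ≤ S := sum_nonneg fun k _ => rpow_nonneg (ha k) t'
  rcases hS.eq_or_lt with hS0 | hSpos
  · refine ⟨0, fun _ => le_rfl, by simp [zero_rpow hu.ne'], ?_⟩
    rw [← hS0, zero_rpow h.one_div_ne_zero]
    exact rpow_nonneg (sum_nonneg fun k _ => rpow_nonneg (mul_nonneg le_rfl (ha k)) t) _
  -- the weight of the equality case of Hölder's inequality for `1/t = 1/t' + 1/u`
  set w : κ → ℝ := fun k => (a k ^ t' / S) ^ (1 / u)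
  have hw : ∀ k, 0 ≤ a k ^ t' / S := fun k => div_nonneg (rpow_nonneg (ha k) t') hS
  have hexp : t' * (1 / u * t) + t = t' := by
    have := h.inv_add_inv_eq_inv
    field_simp at this ⊢
    linarith
  have hwa : ∀ k, (w k * a k) ^ t = a k ^ t' / S ^ (1 / u * t) := fun k => by
    rw [mul_rpow (rpow_nonneg (hw k) _) (ha k), ← rpow_mul (hw k),
      div_rpow (rpow_nonneg (ha k) _) hS, ← rpow_mul (ha k), div_mul_eq_mul_div,
      ← rpow_add' (ha k) (by rw [hexp]; exact ht'.ne'), hexp]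
  refine ⟨w, fun k => rpow_nonneg (hw k) _, le_of_eq ?_, le_of_eq ?_⟩
  · simp_rw [w, ← rpow_mul (hw _), one_div_mul_cancel hu.ne', rpow_one, ← sum_div]
    exact div_self hSpos.ne'
  · calc S ^ (1 / t') = (S ^ (1 - 1 / u * t)) ^ (1 / t) := by
          rw [← rpow_mul hS]
          congr 1
          field_simp at hexp ⊢
          linarith
      _ = (∑ k, (w k * a k) ^ t) ^ (1 / t) := by
          rw [sum_congr rfl fun k _ => hwa k, ← sum_div, rpow_sub hSpos, rpow_one]

end HolderTriple

end Real

theorem ContinuousMultilinearMap.norm_map_update_smul {ι : Type*} [DecidableEq ι]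
    {X : ι → Type*} [∀ k, NormedAddCommGroup (X k)] [∀ k, NormedSpace ℝ (X k)]
    {Y : Type*} [NormedAddCommGroup Y] [NormedSpace ℝ Y] (T : ContinuousMultilinearMap ℝ X Y)
    (v : ∀ k, X k) (i : ι) (c : ℝ) :
    ‖T (Function.update v i (c • v i))‖ = |c| * ‖T v‖ := by
  rw [T.map_update_smul, Function.update_eq_self, norm_smul, Real.norm_eq_abs]

section WeakNorm

variable {X : Type*} [NormedAddCommGroup X] [NormedSpace ℝ X] {n : ℕ}

theorem weakNorm_nonneg (x : Fin n → X) (p : ℝ) : 0 ≤ weakNorm x p :=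
  Real.iSup_nonneg fun _ =>
    Real.rpow_nonneg (sum_nonneg fun _ _ => Real.rpow_nonneg (abs_nonneg _) _) _

theorem le_weakNorm (x : Fin n → X) {p : ℝ} (hp : 0 < p) {φ : X →L[ℝ] ℝ} (hφ : ‖φ‖ ≤ 1) :
    (∑ j, |φ (x j)| ^ p) ^ (1 / p) ≤ weakNorm x p := by
  refine le_ciSup (f := fun φ : {φ : X →L[ℝ] ℝ // ‖φ‖ ≤ 1} => (∑ j, |φ.1 (x j)| ^ p) ^ (1 / p))
    ⟨(∑ j, ‖x j‖ ^ p) ^ (1 / p), ?_⟩ ⟨φ, hφ⟩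
  rintro _ ⟨⟨ψ, hψ⟩, rfl⟩
  dsimp only
  gcongr with j
  exact (ψ.le_opNorm (x j)).trans (mul_le_of_le_one_left (norm_nonneg _) hψ)

theorem weakNorm_smul_le (x : Fin n → X) {w : Fin n → ℝ} (hw : ∀ j, 0 ≤ w j) {u q p : ℝ}
    (h : u.HolderTriple q p) (hwu : ∑ j, w j ^ u ≤ 1) :
    weakNorm (fun j => w j • x j) p ≤ weakNorm x q := by
  have : Nonempty {φ : X →L[ℝ] ℝ // ‖φ‖ ≤ 1} := ⟨⟨0, by simp⟩⟩
  refine ciSup_le fun ⟨φ, hφ⟩ => ?_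
  have hφw : ∀ j, |φ (w j • x j)| = w j * |φ (x j)| := fun j => by
    rw [map_smul, smul_eq_mul, abs_mul, abs_of_nonneg (hw j)]
  calc (∑ j, |φ (w j • x j)| ^ p) ^ (1 / p)
      ≤ (∑ j, w j ^ u) ^ (1 / u) * (∑ j, |φ (x j)| ^ q) ^ (1 / q) := by
        simp_rw [hφw]
        exact Real.Lr_le_Lp_mul_Lq_of_nonneg _ h (fun j _ => hw j) (fun j _ => abs_nonneg _)
    _ ≤ 1 * weakNorm x q := by
        gcongr
        · exact Real.rpow_le_one (sum_nonneg fun j _ => Real.rpow_nonneg (hw j) u) hwu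
            h.one_div_nonneg
        · exact le_weakNorm x h.symm.pos hφ
    _ = weakNorm x q := one_mul _

end WeakNorm

section MultipleSumming

variable {ι : Type*} [Fintype ι] [DecidableEq ι] {X : ι → Type*}
  [∀ k, NormedAddCommGroup (X k)] [∀ k, NormedSpace ℝ (X k)]
  {Y : Type*} [NormedAddCommGroup Y] [NormedSpace ℝ Y]

def IsMultipleSumming (T : ContinuousMultilinearMap ℝ X Y) (r : ℝ) (p : ι → ℝ) (C : ℝ) : Prop :=
  ∀ (n : ι → ℕ) (x : ∀ k, Fin (n k) → X k),
    (∑ j : ∀ k, Fin (n k), ‖T (fun k => x k (j k))‖ ^ r) ^ (1 / r) ≤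
      C * ∏ k, weakNorm (x k) (p k)

theorem IsMultipleSumming.update_exponent {T : ContinuousMultilinearMap ℝ X Y} {t t' C : ℝ}
    {p : ι → ℝ} (hC : 0 ≤ C) (hT : IsMultipleSumming T t p C) {i : ι} {q u : ℝ}
    (hu : u.HolderTriple q (p i)) (ht : t'.HolderTriple u t) :
    IsMultipleSumming T t' (Function.update p i q) C := by
  intro n x
  let b : (∀ k, Fin (n k)) → ℝ := fun j => ‖T (fun k => x k (j k))‖
  have hb : ∀ j, 0 ≤ b j := fun j => norm_nonneg _
  let A : Fin (n i) → ℝ := fun l => (∑ j with j i = l, b j ^ t) ^ (1 / t)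
  obtain ⟨w, hw, hwu, hA⟩ := ht.exists_norming_weight (a := A)
    fun l => Real.rpow_nonneg (sum_nonneg fun j _ => Real.rpow_nonneg (hb j) t) _
  let x' := Function.update x i fun l => w l • x i l
  have hx' : ∀ j, ‖T (fun k => x' k (j k))‖ = w (j i) * b j := fun j => by
    rw [funext fun k => Function.apply_update (fun k (y : Fin (n k) → X k) => y (j k)) x i _ k,
      T.norm_map_update_smul, abs_of_nonneg (hw _)]
  calc (∑ j : ∀ k, Fin (n k), b j ^ t') ^ (1 / t') ≤ (∑ l, A l ^ t') ^ (1 / t') :=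
        Real.rpow_le_rpow (sum_nonneg fun j _ => Real.rpow_nonneg (hb j) t')
          (Real.sum_rpow_le_sum_fiberwise_rpow (fun j : ∀ k, Fin (n k) => j i) hb ht.pos'
            ht.lt.le)
          ht.one_div_nonneg
    _ ≤ (∑ l, (w l * A l) ^ t) ^ (1 / t) := hA
    _ = (∑ j : ∀ k, Fin (n k), ‖T (fun k => x' k (j k))‖ ^ t) ^ (1 / t) := by
        rw [Real.sum_mul_fiberwise_rpow (fun j => j i) hb hw ht.pos']
        simp_rw [hx']
    _ ≤ C * ∏ k, weakNorm (x' k) (p k) := hT n x'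
    _ ≤ C * ∏ k, weakNorm (x k) (Function.update p i q k) := by
        refine mul_le_mul_of_nonneg_left
          (prod_le_prod (fun k _ => weakNorm_nonneg _ _) fun k _ => ?_) hC
        rcases eq_or_ne k i with rfl | hk
        · simpa [x'] using weakNorm_smul_le (x k) hw hu hwu
        · simp [x', hk]

theorem IsMultipleSumming.piecewise {T : ContinuousMultilinearMap ℝ X Y} {r C : ℝ}
    {p q : ι → ℝ} (hC : 0 ≤ C) (hT : IsMultipleSumming T r p C) (hp : ∀ k, 0 < p k)
    (hpq : ∀ k, p k ≤ q k) (s : Finset ι) {t : ℝ} (ht : 0 < t)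
    (hts : 1 / t = 1 / r - ∑ k ∈ s, (1 / p k - 1 / q k)) :
    IsMultipleSumming T t (s.piecewise q p) C := by
  induction s using Finset.induction_on generalizing t with
  | empty =>
    rw [sum_empty, sub_zero, one_div, one_div, inv_inj] at hts
    rwa [piecewise_empty, hts]
  | insert a s ha ih =>
    set t₀ := 1 / (1 / r - ∑ k ∈ s, (1 / p k - 1 / q k))
    have ht₀ : 1 / t₀ = 1 / t + (1 / p a - 1 / q a) := by
      rw [sum_insert ha] at hts
      rw [one_div_one_div]
      linarith
    have hgap : 0 ≤ 1 / p a - 1 / q a := sub_nonneg.2 (one_div_le_one_div_of_le (hp a) (hpq a))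
    have hT₀ := ih (t := t₀) (one_div_pos.1 (by rw [ht₀]; positivity)) (one_div_one_div _)
    have hpa : s.piecewise q p a = p a := piecewise_eq_of_notMem s q p ha
    rw [piecewise_insert]
    rcases (hpq a).eq_or_lt with heq | hlt
    · rw [← heq, ← hpa, Function.update_eq_self]
      rw [heq, sub_self, add_zero, one_div, one_div, inv_inj] at ht₀
      rwa [← ht₀]
    · have hgap_pos : 0 < 1 / p a - 1 / q a := sub_pos.2 (one_div_lt_one_div_of_lt (hp a) hlt)
      have hu : (1 / p a - 1 / q a)⁻¹.HolderTriple (q a) (s.piecewise q p a) :=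
        ⟨by rw [hpa, inv_inv]; ring, inv_pos.2 hgap_pos, (hp a).trans hlt⟩
      have ht : t.HolderTriple (1 / p a - 1 / q a)⁻¹ t₀ :=
        ⟨by rw [inv_inv, ← one_div, ← one_div, ht₀], ht, inv_pos.2 hgap_pos⟩
      exact hT₀.update_exponent hC hu ht

end MultipleSumming

theorem bayart_inclusion_general
    (m : ℕ)
    {X : Fin m → Type*} [∀ k, NormedAddCommGroup (X k)] [∀ k, NormedSpace ℝ (X k)]
    {Y : Type*} [NormedAddCommGroup Y] [NormedSpace ℝ Y]
    (T : ContinuousMultilinearMap ℝ X Y)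
    (r s : ℝ) (p q : Fin m → ℝ)
    (hp : ∀ k, 1 ≤ p k) (hpq : ∀ k, p k ≤ q k)
    (hpos : 0 < 1 / r - ∑ k, 1 / p k + ∑ k, 1 / q k)
    (hsdef : 1 / s = 1 / r - ∑ k, 1 / p k + ∑ k, 1 / q k)
    (C : ℝ) (hC : 0 ≤ C)
    (hT : ∀ (n : Fin m → ℕ) (x : ∀ k, Fin (n k) → X k),
      (∑ j : ∀ k, Fin (n k), ‖T (fun k => x k (j k))‖ ^ r) ^ (1 / r) ≤
        C * ∏ k, weakNorm (x k) (p k)) :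
    ∃ D : ℝ, 0 ≤ D ∧ ∀ (n : Fin m → ℕ) (x : ∀ k, Fin (n k) → X k),
      (∑ j : ∀ k, Fin (n k), ‖T (fun k => x k (j k))‖ ^ s) ^ (1 / s) ≤
        D * ∏ k, weakNorm (x k) (q k) := by
  have hs₀ : 0 < s := one_div_pos.1 (hsdef ▸ hpos)
  have hsum := IsMultipleSumming.piecewise hC hT (fun k => one_pos.trans_le (hp k)) hpq univ hs₀
    (by rw [hsdef, sum_sub_distrib]; ring)
  rw [piecewise_univ] at hsum
  exact ⟨C, hC, hsum⟩

/-- **Bayart's inclusion theorem for multiple summing operators.**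
If `q_k ≥ p_k`, `1/r − ∑ 1/p_k + ∑ 1/q_k > 0` and `1/s = 1/r − ∑ 1/p_k + ∑ 1/q_k`,
then every multiple `(r; p₁,…,p_m)`-summing operator is multiple
`(s; q₁,…,q_m)`-summing. -/
theorem bayart_inclusion
    (m : ℕ) (hm : 0 < m)
    {X : Fin m → Type*} [∀ k, NormedAddCommGroup (X k)] [∀ k, NormedSpace ℝ (X k)]
    [∀ k, CompleteSpace (X k)]
    {Y : Type*} [NormedAddCommGroup Y] [NormedSpace ℝ Y] [CompleteSpace Y]
    (T : ContinuousMultilinearMap ℝ X Y)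
    (r s : ℝ) (p q : Fin m → ℝ) (hr : 1 ≤ r) (hs : 1 ≤ s)
    (hp : ∀ k, 1 ≤ p k) (hpq : ∀ k, p k ≤ q k)
    (hpos : 0 < 1 / r - ∑ k, 1 / p k + ∑ k, 1 / q k)
    (hsdef : 1 / s = 1 / r - ∑ k, 1 / p k + ∑ k, 1 / q k)
    (C : ℝ) (hC : 0 ≤ C)
    (hT : ∀ (n : Fin m → ℕ) (x : ∀ k, Fin (n k) → X k),
      (∑ j : ∀ k, Fin (n k), ‖T (fun k => x k (j k))‖ ^ r) ^ (1 / r) ≤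
        C * ∏ k, weakNorm (x k) (p k)) :
    ∃ D : ℝ, 0 ≤ D ∧ ∀ (n : Fin m → ℕ) (x : ∀ k, Fin (n k) → X k),
      (∑ j : ∀ k, Fin (n k), ‖T (fun k => x k (j k))‖ ^ s) ^ (1 / s) ≤
        D * ∏ k, weakNorm (x k) (q k) :=
  bayart_inclusion_general m T r s p q hp hpq hpos hsdef C hC hT
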